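/- arXiv:1812.06566 — 6 statements merged into one kernel-verified Lean document; each statement's English description precedes it below -/
import Mathlib

section
/- If K is a primary pseudoperfect number divisible by 6, then K ≡ 6 (mod 36). -/
/-! For a prime `q ∣ K` every term `K / p` with `p ≠ q` is divisible by `q`, so the defining
equation `1 + ∑ K / p = K` forces `q ∣ 1 + K / q`. For `q = 2` this makes `K / 2` odd, i.e.
`K ≡ 2 (mod 4)`; for `q = 3` it gives `K / 3 ≡ 2 (mod 3)`, i.e. `K ≡ 6 (mod 9)`. -/

def IsPPN (K : ℕ) : Prop :=
  1 < K ∧ (1 : ℚ) / K + ∑ p ∈ K.primeFactors, (1 : ℚ) / p = 1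

theorem IsPPN.one_add_sum_div_eq {K : ℕ} (hK : IsPPN K) :
    1 + ∑ p ∈ K.primeFactors, K / p = K := by
  obtain ⟨hK1, hsum⟩ := hK
  have hK0 : (K : ℚ) ≠ 0 := by exact_mod_cast (show K ≠ 0 by omega)
  have hcast : ∀ p ∈ K.primeFactors, ((K / p : ℕ) : ℚ) = K * (1 / p) := fun p hp => by
    rw [Nat.cast_div (Nat.dvd_of_mem_primeFactors hp)
      (by exact_mod_cast (Nat.prime_of_mem_primeFactors hp).ne_zero), mul_one_div]
  have : ((1 + ∑ p ∈ K.primeFactors, K / p : ℕ) : ℚ) = K := by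
    calc ((1 + ∑ p ∈ K.primeFactors, K / p : ℕ) : ℚ)
        = K * (1 / K + ∑ p ∈ K.primeFactors, (1 : ℚ) / p) := by
          push_cast
          rw [Finset.sum_congr rfl hcast, ← Finset.mul_sum, mul_add, mul_one_div_cancel hK0]
      _ = K := by rw [hsum, mul_one]
  exact_mod_cast this

theorem Nat.dvd_sum_erase_div_primeFactors {K q : ℕ} (hq : q.Prime) (hqK : q ∣ K) :
    q ∣ ∑ p ∈ K.primeFactors.erase q, K / p := by
  refine Finset.dvd_sum fun p hp => ?_
  have hpK := Nat.dvd_of_mem_primeFactors (Finset.mem_of_mem_erase hp)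
  have hpP := Nat.prime_of_mem_primeFactors (Finset.mem_of_mem_erase hp)
  rw [Nat.dvd_div_iff_mul_dvd hpK]
  exact Nat.Coprime.mul_dvd_of_dvd_of_dvd
    ((Nat.coprime_primes hpP hq).mpr (Finset.ne_of_mem_erase hp)) hpK hqK

theorem IsPPN.dvd_one_add_div {K q : ℕ} (hK : IsPPN K) (hq : q.Prime) (hqK : q ∣ K) :
    q ∣ 1 + K / q := by
  have hmem : q ∈ K.primeFactors := Nat.mem_primeFactors.mpr ⟨hq, hqK, by have := hK.1; omega⟩
  have hsplit : (1 + K / q) + ∑ p ∈ K.primeFactors.erase q, K / p = K := by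
    rw [add_assoc, Finset.add_sum_erase _ _ hmem, hK.one_add_sum_div_eq]
  rw [← Nat.dvd_add_left (Nat.dvd_sum_erase_div_primeFactors hq hqK), hsplit]
  exact hqK

theorem ppn_mod_36 (K : ℕ) (hK : IsPPN K) (h6 : 6 ∣ K) : K % 36 = 6 := by
  have h2 := hK.dvd_one_add_div Nat.prime_two (dvd_trans ⟨3, rfl⟩ h6)
  have h3 := hK.dvd_one_add_div Nat.prime_three (dvd_trans ⟨2, rfl⟩ h6)
  omega
end

section
/- If K is a primary pseudoperfect number divisible by 6, then the number of prime factors of K that are congruent to −1 modulo 6 is even. -/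
/-!
Reducing `1 + ∑_{p ∣ K} K/p = K` modulo a prime factor `q` of `K` kills every term but `K/q`,
so `K/q ≡ -1 (mod q)`; in particular `K` is squarefree. For `q = 3` this says that the product
of the prime factors of `K` other than `3` is `≡ -1 (mod 3)`, so an odd number of them are
`≡ 2 (mod 3)`. These are `2` together with the prime factors `≡ 5 (mod 6)`.
-/

open Finset

theorem Squarefree.div_eq_prod_primeFactors_erase {n q : ℕ} (hn : Squarefree n)
    (hq : q ∈ n.primeFactors) : n / q = ∏ p ∈ n.primeFactors.erase q, p := by
  conv_lhs => rw [← Nat.prod_primeFactors_of_squarefree hn, ← mul_prod_erase _ _ hq]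
  exact Nat.mul_div_cancel_left _ (Nat.pos_of_mem_primeFactors hq)

theorem prod_natCast_zmod_three {s : Finset ℕ} (hs : ∀ p ∈ s, p % 3 ≠ 0) :
    ∏ p ∈ s, (p : ZMod 3) = (-1) ^ #(s.filter (· % 3 = 2)) := by
  have hcast : ∀ p ∈ s, (p : ZMod 3) = if p % 3 = 2 then -1 else 1 := by
    intro p hp
    rw [← ZMod.natCast_mod]
    rcases (by have := hs p hp; omega : p % 3 = 1 ∨ p % 3 = 2) with h | h <;> rw [h] <;> decide
  rw [prod_congr rfl hcast, prod_ite, prod_const, prod_const_one, mul_one]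

theorem card_filter_mod_three_eq_card_filter_mod_six_add_one {s : Finset ℕ} (hs : ∀ p ∈ s, p.Prime) (h2 : 2 ∈ s) :
    #(s.filter (· % 3 = 2)) = #(s.filter (· % 6 = 5)) + 1 := by
  have hsplit : s.filter (· % 3 = 2) = insert 2 (s.filter (· % 6 = 5)) := by
    ext p
    simp only [mem_insert, mem_filter]
    constructor
    · rintro ⟨hp, hp3⟩
      rcases (hs p hp).eq_two_or_odd with rfl | hodd
      · exact Or.inl rfl
      · exact Or.inr ⟨hp, by omega⟩
    · rintro (rfl | ⟨hp, hp6⟩)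
      · exact ⟨h2, rfl⟩
      · exact ⟨hp, by omega⟩
  rw [hsplit, card_insert_of_notMem (by simp)]

namespace IsPPN

variable {K : ℕ} (hK : IsPPN K)
include hK

theorem one_add_sum_div : 1 + ∑ p ∈ K.primeFactors, K / p = K := by
  have hK0 : (K : ℚ) ≠ 0 := by have := hK.1; positivity
  have hcast : ∀ p ∈ K.primeFactors, ((K / p : ℕ) : ℚ) = K * (1 / p) := fun p hp => by
    rw [Nat.cast_div_charZero (Nat.dvd_of_mem_primeFactors hp), mul_one_div]
  exact_mod_cast calc
    (1 : ℚ) + ∑ p ∈ K.primeFactors, ((K / p : ℕ) : ℚ)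
        = K * (1 / K + ∑ p ∈ K.primeFactors, (1 : ℚ) / p) := by
          rw [sum_congr rfl hcast, mul_add, mul_sum, mul_one_div_cancel hK0]
    _ = K := by rw [hK.2, mul_one]

theorem natCast_div_eq_neg_one {q : ℕ} (hq : q ∈ K.primeFactors) :
    ((K / q : ℕ) : ZMod q) = -1 := by
  have hqK := Nat.dvd_of_mem_primeFactors hq
  have hothers : ∀ p ∈ K.primeFactors.erase q, ((K / p : ℕ) : ZMod q) = 0 := by
    intro p hp
    obtain ⟨hpq, hp⟩ := mem_erase.mp hp
    have hcop := (Nat.coprime_primes (Nat.prime_of_mem_primeFactors hp)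
      (Nat.prime_of_mem_primeFactors hq)).mpr hpq
    exact (ZMod.natCast_eq_zero_iff _ _).mpr
      (Nat.dvd_div_of_mul_dvd (hcop.mul_dvd_of_dvd_of_dvd (Nat.dvd_of_mem_primeFactors hp) hqK))
  have h := congrArg (Nat.cast : ℕ → ZMod q) hK.one_add_sum_div
  rw [(ZMod.natCast_eq_zero_iff _ _).mpr hqK, Nat.cast_add, Nat.cast_one, Nat.cast_sum,
    ← add_sum_erase _ _ hq, sum_eq_zero hothers, add_zero] at h
  exact eq_neg_of_add_eq_zero_right h

theorem squarefree : Squarefree K := by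
  refine Nat.squarefree_iff_prime_squarefree.mpr fun q hq hqq => ?_
  have : Fact q.Prime := ⟨hq⟩
  have hqK : q ∈ K.primeFactors :=
    Nat.mem_primeFactors.mpr ⟨hq, dvd_trans (dvd_mul_left q q) hqq, by have := hK.1; omega⟩
  have h := hK.natCast_div_eq_neg_one hqK
  rw [(ZMod.natCast_eq_zero_iff _ _).mpr (Nat.dvd_div_of_mul_dvd hqq)] at h
  exact neg_ne_zero.mpr one_ne_zero h.symm

end IsPPN

theorem ppn_even_mu (K : ℕ) (hK : IsPPN K) (h6 : 6 ∣ K) :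
    Even ((K.primeFactors.filter (fun p => p % 6 = 5)).card) := by
  have hK0 : K ≠ 0 := by have := hK.1; omega
  have h2 : 2 ∈ K.primeFactors := Nat.mem_primeFactors.mpr ⟨Nat.prime_two, by omega, hK0⟩
  have h3 : 3 ∈ K.primeFactors := Nat.mem_primeFactors.mpr ⟨Nat.prime_three, by omega, hK0⟩
  have hcoprime : ∀ p ∈ K.primeFactors.erase 3, p % 3 ≠ 0 := fun p hp h0 =>
    (mem_erase.mp hp).1 ((Nat.prime_dvd_prime_iff_eq Nat.prime_three
      (Nat.prime_of_mem_primeFactors (mem_erase.mp hp).2)).mp (Nat.dvd_of_mod_eq_zero h0)).symm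
  have hodd : Odd #((K.primeFactors.erase 3).filter (· % 3 = 2)) := by
    rw [← neg_one_pow_eq_neg_one_iff_odd (R := ZMod 3) (by decide),
      ← prod_natCast_zmod_three hcoprime, ← Nat.cast_prod,
      ← hK.squarefree.div_eq_prod_primeFactors_erase h3]
    exact hK.natCast_div_eq_neg_one h3
  rw [filter_erase, erase_eq_of_notMem (by simp),
    card_filter_mod_three_eq_card_filter_mod_six_add_one (fun p => Nat.prime_of_mem_primeFactors) h2] at hodd
  exact Nat.not_odd_iff_even.mp (Nat.odd_add_one.mp hodd)
end

section
/- Let K be a primary pseudoperfect number with K + 1 and K² + K + 1 both prime. Then K' := K(K+1) and K'' := K'(K'+1) are also primary pseudoperfect numbers. -/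
/-! The identity `1/K = 1/(K+1) + 1/(K(K+1))` shows that adjoining a new prime factor `K + 1` to a
primary pseudoperfect number `K` gives another one; apply this to `K` and then to `K(K+1)`, whose
successor is the prime `K² + K + 1`. -/

theorem IsPPN.mul_succ {K : ℕ} (hK : IsPPN K) (hp : (K + 1).Prime) : IsPPN (K * (K + 1)) := by
  obtain ⟨hK1, hsum⟩ := hK
  have hK0 : (K : ℚ) ≠ 0 := by positivity
  have hdisj : Disjoint K.primeFactors (K + 1).primeFactors :=
    (Nat.coprime_self_add_right.mpr (Nat.coprime_one_right K)).disjoint_primeFactors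
  refine ⟨by nlinarith, ?_⟩
  rw [Nat.primeFactors_mul (by omega) K.succ_ne_zero, Finset.sum_union hdisj, hp.primeFactors,
    Finset.sum_singleton, ← sub_eq_of_eq_add' hsum.symm]
  push_cast
  field_simp
  ring

theorem ppn_triple (K : ℕ) (hK : IsPPN K) (hp : Nat.Prime (K + 1))
    (hq : Nat.Prime (K ^ 2 + K + 1)) :
    IsPPN (K * (K + 1)) ∧ IsPPN (K * (K + 1) * (K * (K + 1) + 1)) := by
  have hK' := hK.mul_succ hp
  refine ⟨hK', hK'.mul_succ ?_⟩
  rwa [show K * (K + 1) + 1 = K ^ 2 + K + 1 by ring]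
end

section
/- Let K be a primary pseudoperfect number divisible by 6 such that K + 1 and K² + K + 1 are prime, and set K' := K(K+1), K'' := K'(K'+1). Then K, K', K'' are congruent to K, K + 36, K + 72 modulo 864, respectively. -/
/-!
Multiplying the defining equation by `K` gives `1 + ∑_{p ∣ K} K / p = K`. Modulo a prime
`r ∣ K` every summand except `K / r` vanishes, so `r ∣ K / r + 1`; for `r = 2, 3` this says
`K ≡ 2 [MOD 4]` and `K ≡ 6 [MOD 9]`, i.e. `K ≡ 6 [MOD 36]`. For `n = 36a + 6` one has
`n (n + 1) - (n + 36) = (n - 6)(n + 6) = 432 a (3a + 1)` with `a (3a + 1)` even, so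
`n ↦ n (n + 1)` adds `36` modulo `864` and preserves the class `6` modulo `36`.
-/

namespace IsPPN

variable {K : ℕ}

theorem one_add_sum_div_primeFactors (hK : IsPPN K) :
    1 + ∑ p ∈ K.primeFactors, K / p = K := by
  obtain ⟨hK1, hsum⟩ := hK
  have hK0 : (K : ℚ) ≠ 0 := by exact_mod_cast (by omega : K ≠ 0)
  have hterm : ∀ p ∈ K.primeFactors, ((K / p : ℕ) : ℚ) = K * (1 / p) := fun p hp => by
    have hp0 : (p : ℚ) ≠ 0 := by exact_mod_cast (Nat.prime_of_mem_primeFactors hp).ne_zero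
    rw [Nat.cast_div (Nat.dvd_of_mem_primeFactors hp) hp0]
    ring
  have hcast : ((1 + ∑ p ∈ K.primeFactors, K / p : ℕ) : ℚ) = K := by
    rw [Nat.cast_add, Nat.cast_sum, Finset.sum_congr rfl hterm, ← Finset.mul_sum,
      ← sub_eq_of_eq_add' hsum.symm]
    field_simp
    ring
  exact_mod_cast hcast

theorem dvd_div_add_one {r : ℕ} (hK : IsPPN K) (hr : r ∈ K.primeFactors) :
    r ∣ K / r + 1 := by
  have hrK : r ∣ K := Nat.dvd_of_mem_primeFactors hr
  have hrest : r ∣ ∑ p ∈ K.primeFactors.erase r, K / p := by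
    refine Finset.dvd_sum fun p hp => ?_
    obtain ⟨hpr, hpK⟩ := Finset.mem_erase.mp hp
    have hcop : r.Coprime p := (Nat.coprime_primes (Nat.prime_of_mem_primeFactors hr)
      (Nat.prime_of_mem_primeFactors hpK)).mpr hpr.symm
    exact hcop.dvd_of_dvd_mul_right (by rwa [Nat.div_mul_cancel (Nat.dvd_of_mem_primeFactors hpK)])
  have hsplit := hK.one_add_sum_div_primeFactors
  rw [← Finset.add_sum_erase _ _ hr] at hsplit
  have : r ∣ (K / r + 1) + ∑ p ∈ K.primeFactors.erase r, K / p := by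
    rw [← hsplit] at hrK
    convert hrK using 1
    ring
  exact (Nat.dvd_add_left hrest).mp this

theorem modEq_six_of_six_dvd (hK : IsPPN K) (h6 : 6 ∣ K) : K ≡ 6 [MOD 36] := by
  have hK0 : K ≠ 0 := by have := hK.1; omega
  have h2 := hK.dvd_div_add_one
    (Nat.mem_primeFactors.mpr ⟨Nat.prime_two, (by norm_num : 2 ∣ 6).trans h6, hK0⟩)
  have h3 := hK.dvd_div_add_one
    (Nat.mem_primeFactors.mpr ⟨Nat.prime_three, (by norm_num : 3 ∣ 6).trans h6, hK0⟩)
  obtain ⟨k, rfl⟩ := h6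
  rw [show 6 * k = 2 * (3 * k) by ring, Nat.mul_div_cancel_left _ two_pos] at h2
  rw [show 6 * k = 3 * (2 * k) by ring, Nat.mul_div_cancel_left _ three_pos] at h3
  unfold Nat.ModEq
  omega

end IsPPN

theorem Nat.mul_succ_modEq_add_36 {n : ℕ} (hn : n ≡ 6 [MOD 36]) :
    n * (n + 1) ≡ n + 36 [MOD 864] := by
  obtain ⟨a, rfl⟩ : ∃ a, n = 36 * a + 6 := ⟨n / 36, by unfold Nat.ModEq at hn; omega⟩
  obtain ⟨b, hb⟩ : Even (a * (3 * a + 1)) := by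
    rw [show a * (3 * a + 1) = a * (a + 1) + 2 * (a * a) by ring]
    exact (Nat.even_mul_succ_self a).add (even_two_mul _)
  have hexpand : (36 * a + 6) * (36 * a + 6 + 1) = (36 * a + 6 + 36) + 864 * b := by
    linear_combination 432 * hb
  rw [hexpand]
  exact Nat.add_modulus_mul_modEq_iff.mpr rfl

theorem ppn_triple_mod_864_general (K : ℕ) (hK : IsPPN K) (h6 : 6 ∣ K) :
    K * (K + 1) ≡ K + 36 [MOD 864] ∧
    (K * (K + 1)) * (K * (K + 1) + 1) ≡ K + 72 [MOD 864] := by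
  have hK36 : K ≡ 6 [MOD 36] := hK.modEq_six_of_six_dvd h6
  have hK' : K * (K + 1) ≡ K + 36 [MOD 864] := Nat.mul_succ_modEq_add_36 hK36
  have hK'36 : K * (K + 1) ≡ 6 [MOD 36] :=
    (hK'.of_mul_right 24).trans (Nat.add_modEq_right.trans hK36)
  refine ⟨hK', ?_⟩
  calc (K * (K + 1)) * (K * (K + 1) + 1) ≡ K * (K + 1) + 36 [MOD 864] :=
        Nat.mul_succ_modEq_add_36 hK'36
    _ ≡ K + 36 + 36 [MOD 864] := hK'.add_right 36
    _ = K + 72 := by ring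

theorem ppn_triple_mod_864 (K : ℕ) (hK : IsPPN K) (h6 : 6 ∣ K)
    (hp : Nat.Prime (K + 1)) (hq : Nat.Prime (K ^ 2 + K + 1)) :
    K * (K + 1) ≡ K + 36 [MOD 864] ∧
    (K * (K + 1)) * (K * (K + 1) + 1) ≡ K + 72 [MOD 864] :=
  ppn_triple_mod_864_general K hK h6
end

section
/- For positive integers k and n, the congruence 1ⁿ + 2ⁿ + ⋯ + kⁿ ≡ (k+1)ⁿ (mod k) holds if and only if 1/k + Σ_{p prime, p ∣ k} 1/p is an integer and every prime p dividing k satisfies (p − 1) ∣ n. -/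
/-!
Since `k + 1 ≡ 1 (mod k)`, the congruence says `S ≡ 1 (mod k)` for `S = ∑ iⁿ`. For a prime
`q ∣ k`, the summands are `q`-periodic, so `S ≡ (k/q) ∑_{x ∈ 𝔽_q} xⁿ`, which is `-(k/q)` if
`q - 1 ∣ n` and `0` otherwise; hence `S ≡ 1 (mod q)` iff `q - 1 ∣ n` and `q ∣ k/q + 1`. On the other
side, `1/k + ∑ 1/p = (1 + ∑ k/p)/k` and `1 + ∑ k/p ≡ 1 + k/q (mod q)`. In both directions every
prime factor `q` satisfies `q ∣ k/q + 1`, which rules out `q² ∣ k`; so `k` is squarefree and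
congruences modulo `k` can be checked prime by prime.
-/
open Finset

theorem Function.Periodic.sum_range_mul {M : Type*} [AddCommMonoid M] {f : ℕ → M} {c : ℕ}
    (hf : Function.Periodic f c) (m : ℕ) :
    ∑ i ∈ range (m * c), f i = m • ∑ i ∈ range c, f i := by
  induction m with
  | zero => simp
  | succ m ih =>
    rw [Nat.succ_mul, sum_range_add, ih, succ_nsmul]
    congr 1
    exact sum_congr rfl fun i _ ↦ by rw [add_comm]; exact hf.nat_mul m i

namespace ZMod

theorem sum_range_natCast {M : Type*} [AddCommMonoid M] (q : ℕ) [NeZero q] (g : ZMod q → M) :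
    ∑ i ∈ range q, g i = ∑ x, g x := by
  obtain ⟨p, rfl⟩ := Nat.exists_eq_add_one_of_ne_zero (NeZero.ne q)
  rw [← Fin.sum_univ_eq_sum_range (fun i ↦ g i)]
  exact Fintype.sum_congr _ _ fun i ↦ congrArg g (Fin.cast_val_eq_self i)

theorem sum_pow_eq_ite (p : ℕ) [Fact p.Prime] {n : ℕ} (hn : n ≠ 0) :
    ∑ x : ZMod p, x ^ n = if p - 1 ∣ n then -1 else 0 := by
  classical
  rw [Fintype.sum_eq_add_sum_subtype_ne _ 0, zero_pow hn, zero_add,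
    ← Fintype.sum_equiv unitsEquivNeZero (fun u : (ZMod p)ˣ ↦ (u : ZMod p) ^ n) _ fun _ ↦ rfl,
    FiniteField.sum_pow_units, ZMod.card]

theorem sum_Icc_pow_of_dvd {q k : ℕ} [NeZero q] (h : q ∣ k) (n : ℕ) :
    ∑ i ∈ Icc 1 k, (i : ZMod q) ^ n = (k / q : ℕ) * ∑ x : ZMod q, x ^ n := by
  have hper : Function.Periodic (fun i : ℕ ↦ ((i + 1 : ℕ) : ZMod q) ^ n) q := fun i ↦ by simp
  calc ∑ i ∈ Icc 1 k, (i : ZMod q) ^ n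
      = ∑ i ∈ range (k / q * q), ((i + 1 : ℕ) : ZMod q) ^ n := by
        rw [Nat.div_mul_cancel h, range_eq_Ico, sum_Ico_add' (fun i : ℕ ↦ (i : ZMod q) ^ n),
          zero_add, Ico_add_one_right_eq_Icc]
    _ = (k / q : ℕ) * ∑ x : ZMod q, (x + 1) ^ n := by
        rw [hper.sum_range_mul, nsmul_eq_mul, ← sum_range_natCast q (fun x ↦ (x + 1) ^ n)]
        push_cast; rfl
    _ = (k / q : ℕ) * ∑ x : ZMod q, x ^ n :=
        congrArg _ (Equiv.sum_comp (Equiv.addRight 1) fun x ↦ x ^ n)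

end ZMod

theorem Rat.exists_intCast_eq_natCast_div_iff {m n : ℕ} (hn : n ≠ 0) :
    (∃ z : ℤ, (m : ℚ) / n = z) ↔ n ∣ m := by
  rw [← Rat.den_div_natCast_eq_one_iff m n hn, Rat.den_eq_one_iff]
  exact ⟨fun ⟨z, hz⟩ ↦ by rw [hz, Rat.num_intCast], fun h ↦ ⟨_, h.symm⟩⟩

namespace Nat

theorem one_div_add_sum_one_div_primeFactors (k : ℕ) :
    (1 : ℚ) / k + ∑ p ∈ k.primeFactors, (1 : ℚ) / p
      = ((1 + ∑ p ∈ k.primeFactors, k / p : ℕ) : ℚ) / k := by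
  push_cast
  rw [add_div, sum_div]
  refine congrArg _ (sum_congr rfl fun p hp ↦ ?_)
  have hp0 : (p : ℚ) ≠ 0 := by exact_mod_cast (pos_of_mem_primeFactors hp).ne'
  have hk0 : (k : ℚ) ≠ 0 := by exact_mod_cast (mem_primeFactors.1 hp).2.2
  rw [Nat.cast_div (dvd_of_mem_primeFactors hp) hp0]
  field_simp

theorem modEq_iff_forall_primeFactors_of_squarefree {k a b : ℕ} (hk : Squarefree k) :
    a ≡ b [MOD k] ↔ ∀ p ∈ k.primeFactors, a ≡ b [MOD p] := by
  have hco : k.primeFactors.toList.Pairwise (Function.onFun Coprime id) :=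
    (nodup_toList _).pairwise_of_forall_ne fun p hp q hq hpq ↦
      (coprime_primes (prime_of_mem_primeFactors (mem_toList.1 hp))
        (prime_of_mem_primeFactors (mem_toList.1 hq))).2 hpq
  conv_lhs => rw [← prod_primeFactors_of_squarefree hk, ← prod_map_toList]
  simpa using modEq_list_map_prod_iff hco

theorem squarefree_of_forall_dvd_div_add_one {k : ℕ} (hk : k ≠ 0)
    (h : ∀ q ∈ k.primeFactors, q ∣ k / q + 1) : Squarefree k := by
  refine squarefree_iff_prime_squarefree.2 fun q hq hqq ↦ hq.one_lt.ne' ?_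
  have hqk : q ∈ k.primeFactors := mem_primeFactors.2 ⟨hq, dvd_of_mul_left_dvd hqq, hk⟩
  exact Nat.dvd_one.1 ((Nat.dvd_add_right (Nat.dvd_div_of_mul_dvd hqq)).1 (h q hqk))

theorem sum_Icc_pow_modEq_one_iff {q k n : ℕ} (hq : q.Prime) (hqk : q ∣ k) (hn : n ≠ 0) :
    ∑ i ∈ Icc 1 k, i ^ n ≡ 1 [MOD q] ↔ q - 1 ∣ n ∧ q ∣ k / q + 1 := by
  have := Fact.mk hq
  rw [← ZMod.natCast_eq_natCast_iff, ← ZMod.natCast_eq_zero_iff (k / q + 1)]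
  push_cast
  rw [ZMod.sum_Icc_pow_of_dvd hqk, ZMod.sum_pow_eq_ite q hn]
  split_ifs with hd
  · rw [mul_neg_one, neg_eq_iff_eq_neg, eq_neg_iff_add_eq_zero]
    exact (and_iff_right hd).symm
  · simp only [mul_zero, zero_ne_one, hd, false_and]

theorem sum_div_primeFactors_modEq {k q : ℕ} (hq : q ∈ k.primeFactors) :
    ∑ p ∈ k.primeFactors, k / p ≡ k / q [MOD q] := by
  rw [← ZMod.natCast_eq_natCast_iff, Nat.cast_sum]
  refine sum_eq_single_of_mem q hq fun p hp hpq ↦ (ZMod.natCast_eq_zero_iff _ _).2 ?_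
  have hcop : p.Coprime q :=
    (coprime_primes (prime_of_mem_primeFactors hp) (prime_of_mem_primeFactors hq)).2 hpq
  exact dvd_div_of_mul_dvd
    (hcop.mul_dvd_of_dvd_of_dvd (dvd_of_mem_primeFactors hp) (dvd_of_mem_primeFactors hq))

theorem one_add_sum_div_primeFactors_modEq_zero_iff {k q : ℕ} (hq : q ∈ k.primeFactors) :
    1 + ∑ p ∈ k.primeFactors, k / p ≡ 0 [MOD q] ↔ q ∣ k / q + 1 := by
  rw [modEq_zero_iff_dvd, ((sum_div_primeFactors_modEq hq).add_left 1).dvd_iff dvd_rfl, add_comm]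

end Nat

theorem erdos_moser_congruence_iff (k n : ℕ) (hk : 0 < k) (hn : 0 < n) :
    (∑ i ∈ Finset.Icc 1 k, i ^ n) ≡ (k + 1) ^ n [MOD k] ↔
    ((∃ z : ℤ, (1 : ℚ) / k + ∑ p ∈ k.primeFactors, (1 : ℚ) / p = z) ∧
      ∀ p ∈ k.primeFactors, (p - 1) ∣ n) := by
  have hpow : (k + 1) ^ n ≡ 1 [MOD k] := by simpa using (Nat.add_modEq_left (a := 1)).pow n
  have hcongr : ∀ S, S ≡ (k + 1) ^ n [MOD k] ↔ S ≡ 1 [MOD k] := fun S ↦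
    ⟨(·.trans hpow), (·.trans hpow.symm)⟩
  have hS_mod (q) (hq : q ∈ k.primeFactors) := Nat.sum_Icc_pow_modEq_one_iff
    (Nat.prime_of_mem_primeFactors hq) (Nat.dvd_of_mem_primeFactors hq) hn.ne'
  have hN_mod (q) (hq : q ∈ k.primeFactors) := Nat.one_add_sum_div_primeFactors_modEq_zero_iff hq
  rw [hcongr, Nat.one_div_add_sum_one_div_primeFactors,
    Rat.exists_intCast_eq_natCast_div_iff hk.ne', ← Nat.modEq_zero_iff_dvd]
  constructor
  · intro hS
    have hfac (q) (hq : q ∈ k.primeFactors) :=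
      (hS_mod q hq).1 (hS.of_dvd (Nat.dvd_of_mem_primeFactors hq))
    have hsq := Nat.squarefree_of_forall_dvd_div_add_one hk.ne' fun q hq ↦ (hfac q hq).2
    exact ⟨(Nat.modEq_iff_forall_primeFactors_of_squarefree hsq).2 fun q hq ↦
      (hN_mod q hq).2 (hfac q hq).2, fun q hq ↦ (hfac q hq).1⟩
  · rintro ⟨hN, hdvd⟩
    have hfac (q) (hq : q ∈ k.primeFactors) : q ∣ k / q + 1 :=
      (hN_mod q hq).1 (hN.of_dvd (Nat.dvd_of_mem_primeFactors hq))
    have hsq := Nat.squarefree_of_forall_dvd_div_add_one hk.ne' hfac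
    exact (Nat.modEq_iff_forall_primeFactors_of_squarefree hsq).2 fun q hq ↦
      (hS_mod q hq).2 ⟨hdvd q hq, hfac q hq⟩
end

section
/- If K is a primary pseudoperfect number with exactly 2 distinct prime factors, then K = 6. -/
/-!
Clearing denominators in `1/K + 1/p + 1/q = 1` gives `pq + Kq + Kp = Kpq`. Writing `K = mpq`
(both primes divide `K`), this becomes `1 + mq + mp = mpq`, so `m ∣ 1` and `K = pq` with
`pq = p + q + 1`, i.e. `(p - 1)(q - 1) = 2`, whence `{p, q} = {2, 3}`.
-/

theorem Nat.mul_eq_six_of_mul_eq_add_add_one {a b : ℕ} (h : a * b = a + b + 1) :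
    a * b = 6 := by
  have hz : ((a : ℤ) - 1) * ((b : ℤ) - 1) = 2 := by
    have : (a * b : ℤ) = a + b + 1 := by exact_mod_cast h
    linear_combination this
  have ha : (a : ℤ) - 1 ≤ 2 := Int.le_of_dvd two_pos ⟨_, hz.symm⟩
  have hb : (b : ℤ) - 1 ≤ 2 := Int.le_of_dvd two_pos ⟨_, by rw [← hz, mul_comm]⟩
  have ha3 : a ≤ 3 := by omega
  have hb3 : b ≤ 3 := by omega
  interval_cases a <;> interval_cases b <;> omega

theorem Nat.eq_mul_of_dvd_of_mul_add_mul_add_mul_eq {K a b : ℕ} (hK : 0 < K) (hab : a * b ∣ K)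
    (h : a * b + K * b + K * a = K * (a * b)) : K = a * b ∧ a * b = a + b + 1 := by
  obtain ⟨m, rfl⟩ := hab
  have hab0 : 0 < a * b := Nat.pos_of_mul_pos_right hK
  have key : m * b + m * a + 1 = m * (a * b) :=
    Nat.eq_of_mul_eq_mul_left hab0 (by linear_combination h)
  have hm : m = 1 :=
    Nat.dvd_one.mp ((Nat.dvd_add_right ⟨b + a, by ring⟩).mp (key ▸ Dvd.intro _ rfl))
  subst hm
  constructor <;> linarith

theorem IsPPN.mul_add_mul_add_mul_eq_of_primeFactors_eq_pair {K p q : ℕ} (hK : IsPPN K)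
    (hpq : p ≠ q) (hKpq : K.primeFactors = {p, q}) : p * q + K * q + K * p = K * (p * q) := by
  have hp : p.Prime := Nat.prime_of_mem_primeFactors (n := K) (by simp [hKpq])
  have hq : q.Prime := Nat.prime_of_mem_primeFactors (n := K) (by simp [hKpq])
  obtain ⟨hK1, heq⟩ := hK
  rw [hKpq, Finset.sum_pair hpq] at heq
  have hK0 : (K : ℚ) ≠ 0 := by positivity
  have hp0 : (p : ℚ) ≠ 0 := by exact_mod_cast hp.ne_zero
  have hq0 : (q : ℚ) ≠ 0 := by exact_mod_cast hq.ne_zero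
  have : (p * q + K * q + K * p : ℚ) = K * (p * q) := by
    field_simp at heq
    linarith
  exact_mod_cast this

theorem ppn_two_prime_factors (K : ℕ) (hK : IsPPN K)
    (h2 : K.primeFactors.card = 2) : K = 6 := by
  obtain ⟨p, q, hpq, hKpq⟩ := Finset.card_eq_two.mp h2
  have hdvd : p * q ∣ K := by
    simpa [hKpq, Finset.prod_pair hpq] using Nat.prod_primeFactors_dvd K
  obtain ⟨rfl, hsum⟩ := Nat.eq_mul_of_dvd_of_mul_add_mul_add_mul_eq (by linarith [hK.1]) hdvd
    (hK.mul_add_mul_add_mul_eq_of_primeFactors_eq_pair hpq hKpq)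
  exact Nat.mul_eq_six_of_mul_eq_add_add_one hsum
end
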